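/- arXiv:1707.04235 — 3 statements merged into one kernel-verified Lean document; each statement's English description precedes it below -/
import Mathlib

section
/- For the harmonic oscillator Ornstein–Uhlenbeck process, the conditional covariance ∫_0^Δ e^{sM} C Cᵀ e^{sMᵀ} ds equals σ² [[Δ³/3, Δ²/2 − γΔ³/2],[Δ²/2 − γΔ³/2, Δ − γΔ² + (2γ²−D)Δ³/3]] + O(Δ⁴) as Δ → 0. -/
/-!
The quadratic Taylor polynomial `1 + sA + s²A²/2` approximates `exp (sA)` up to `O(s³)` in any
Banach algebra, so `exp (sM) B exp (sMᵀ)` agrees up to `O(s³)` with the product of the two Taylor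
polynomials, and hence, after discarding the `s³` and `s⁴` terms of that product, with the quadratic
`B + s (MB + BMᵀ) + s²/2 (M²B + 2MBMᵀ + BMᵀ²)`. Integrating over `[0, Δ]` gives a cubic in `Δ` with
an `O(Δ⁴)` error, and for `M = [[0,1],[-D,-γ]]`, `B = CCᵀ = diag(0, σ²)` that cubic is exactly
`σ²` times the stated matrix.
-/

open Matrix NormedSpace Asymptotics Topology Filter

section
variable {𝔸 : Type*} [NormedRing 𝔸] [NormedAlgebra ℝ 𝔸] [CompleteSpace 𝔸]

theorem exp_smul_sub_taylor_isBigO (A : 𝔸) :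
    (fun s : ℝ => exp (s • A) - (1 + s • A + (s ^ 2 / 2) • (A * A))) =O[𝓝 0] fun s => s ^ 3 := by
  have hexp := (hasFPowerSeriesAt_exp_zero_of_radius_pos (𝕂 := ℝ) (𝔸 := 𝔸)
    (by simp [expSeries_radius_eq_top])).isBigO_sub_partialSum_pow 3
  have hlim : Tendsto (fun s : ℝ => s • A) (𝓝 0) (𝓝 0) := by
    simpa using (continuous_id.smul continuous_const).tendsto (0:ℝ) (f := fun s : ℝ => s • A)
  refine ((hexp.comp_tendsto hlim).congr_left fun s => ?_).trans ?_
  · simp only [Function.comp_apply, zero_add, FormalMultilinearSeries.partialSum,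
      expSeries_apply_eq, Finset.sum_range_succ, Finset.sum_range_zero, Nat.factorial_zero,
      Nat.factorial_one, Nat.factorial_two, pow_zero, pow_one, smul_pow, sq A]
    module
  · refine .of_bound (‖A‖ ^ 3) (.of_forall fun s => ?_)
    simp [norm_smul, mul_pow, mul_comm]

theorem continuous_exp_smul (A : 𝔸) : Continuous fun s : ℝ => exp (s • A) :=
  (continuous_iff_continuousAt.2 fun X => (exp_analytic (𝕂 := ℝ) X).continuousAt).comp
    (continuous_id.smul continuous_const)

theorem exp_smul_mul_mul_exp_smul_sub_taylor_isBigO (A B A' : 𝔸) :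
    (fun s : ℝ => exp (s • A) * B * exp (s • A') - (B + s • (A * B + B * A') +
      (s ^ 2 / 2) • (A * A * B + (2 : ℝ) • (A * B * A') + B * A' * A'))) =O[𝓝 0]
      fun s => s ^ 3 := by
  set P : 𝔸 → ℝ → 𝔸 := fun X s => 1 + s • X + (s ^ 2 / 2) • (X * X)
  have hbdd {f : ℝ → 𝔸} (hf : Continuous f) : f =O[𝓝 0] fun _ => (1 : ℝ) :=
    hf.continuousAt.isBigO_one ℝ
  have hdecomp : ∀ s : ℝ, exp (s • A) * B * exp (s • A') - (B + s • (A * B + B * A') +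
      (s ^ 2 / 2) • (A * A * B + (2 : ℝ) • (A * B * A') + B * A' * A')) =
      (exp (s • A) - P A s) * (B * exp (s • A')) + P A s * B * (exp (s • A') - P A' s) +
        s ^ 3 • ((1 / 2 : ℝ) • (A * B * A' * A' + A * A * B * A') +
          (s / 4) • (A * A * B * A' * A')) := by
    intro s
    simp only [P, add_mul, mul_add, mul_sub, sub_mul, smul_mul_assoc, mul_smul_comm, one_mul,
      mul_one, smul_smul, mul_assoc, smul_add]
    module
  have hBE : (fun s : ℝ => B * exp (s • A')) =O[𝓝 0] fun _ => (1 : ℝ) :=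
    hbdd (continuous_const.mul (continuous_exp_smul A'))
  have hPB : (fun s : ℝ => P A s * B) =O[𝓝 0] fun _ => (1 : ℝ) := hbdd (by fun_prop)
  have hQ : (fun s : ℝ => (1 / 2 : ℝ) • (A * B * A' * A' + A * A * B * A') +
      (s / 4) • (A * A * B * A' * A')) =O[𝓝 0] fun _ => (1 : ℝ) := hbdd (by fun_prop)
  simp only [hdecomp]
  refine IsBigO.add (IsBigO.add ?_ ?_) ?_
  · simpa using (exp_smul_sub_taylor_isBigO A).mul hBE
  · simpa using hPB.mul (exp_smul_sub_taylor_isBigO A')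
  · simpa using (isBigO_refl (fun s : ℝ => s ^ 3) _).smul hQ
end

section
variable {E : Type*} [NormedAddCommGroup E] [NormedSpace ℝ E] [CompleteSpace E]

theorem integral_quadratic (b x y : E) (Δ : ℝ) :
    ∫ s in (0 : ℝ)..Δ, (b + s • x + (s ^ 2 / 2) • y) =
      Δ • b + (Δ ^ 2 / 2) • x + (Δ ^ 3 / 6) • y := by
  have hint {g : ℝ → E} (hg : Continuous g) : IntervalIntegrable g MeasureTheory.volume 0 Δ :=
    hg.intervalIntegrable _ _
  rw [intervalIntegral.integral_add (hint (by fun_prop)) (hint (by fun_prop)),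
    intervalIntegral.integral_add (hint (by fun_prop)) (hint (by fun_prop)),
    intervalIntegral.integral_smul_const, intervalIntegral.integral_smul_const]
  rw [intervalIntegral.integral_const, intervalIntegral.integral_div, integral_pow, integral_id]
  module

theorem norm_integral_sub_quadratic_le {f : ℝ → E} {b x y : E} {c Δ : ℝ} (hΔ : 0 ≤ Δ)
    (hf : IntervalIntegrable f MeasureTheory.volume 0 Δ)
    (h : ∀ s ∈ Set.Ioc 0 Δ, ‖f s - (b + s • x + (s ^ 2 / 2) • y)‖ ≤ c * s ^ 3) :
    ‖(∫ s in (0 : ℝ)..Δ, f s) - (Δ • b + (Δ ^ 2 / 2) • x + (Δ ^ 3 / 6) • y)‖ ≤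
      c / 4 * Δ ^ 4 := by
  rw [← integral_quadratic, ← intervalIntegral.integral_sub hf
    ((by fun_prop : Continuous fun s : ℝ => b + s • x + (s ^ 2 / 2) • y).intervalIntegrable _ _)]
  calc _ ≤ ∫ s in (0 : ℝ)..Δ, c * s ^ 3 :=
        intervalIntegral.norm_integral_le_of_norm_le hΔ (.of_forall h)
          ((by fun_prop : Continuous fun s : ℝ => c * s ^ 3).intervalIntegrable _ _)
    _ = c / 4 * Δ ^ 4 := by rw [intervalIntegral.integral_const_mul, integral_pow]; ring
end

namespace Matrix

attribute [local instance] Matrix.linftyOpSeminormedAddCommGroup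

theorem norm_entry_le_linfty_opNorm {m n α : Type*} [Fintype m] [Fintype n]
    [SeminormedAddCommGroup α] (A : Matrix m n α) (i : m) (j : n) : ‖A i j‖ ≤ ‖A‖ :=
  (PiLp.norm_apply_le (WithLp.toLp 1 (A i)) j).trans
    (norm_le_pi_norm (fun i => WithLp.toLp 1 (A i)) i)

end Matrix

theorem harmonicOscillator_taylor_coeffs (D γ σ Δ : ℝ) {M : Matrix (Fin 2) (Fin 2) ℝ}
    {C : Matrix (Fin 2) (Fin 1) ℝ} (hM : M = !![0, 1; -D, -γ]) (hC : C = !![0; σ]) :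
    Δ • (C * Cᵀ) + (Δ ^ 2 / 2) • (M * (C * Cᵀ) + C * Cᵀ * Mᵀ) +
        (Δ ^ 3 / 6) • (M * M * (C * Cᵀ) + (2 : ℝ) • (M * (C * Cᵀ) * Mᵀ) + C * Cᵀ * Mᵀ * Mᵀ) =
      σ ^ 2 • !![Δ ^ 3 / 3, Δ ^ 2 / 2 - γ * Δ ^ 3 / 2;
        Δ ^ 2 / 2 - γ * Δ ^ 3 / 2, Δ - γ * Δ ^ 2 + (2 * γ ^ 2 - D) * Δ ^ 3 / 3] := by
  subst hM hC
  ext i j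
  fin_cases i <;> fin_cases j <;>
    simp [Matrix.mul_apply, Fin.sum_univ_two, Matrix.vecMul, dotProduct] <;> ring

theorem stmt_6_general (D γ σ : ℝ)
    (M : Matrix (Fin 2) (Fin 2) ℝ) (hM : M = !![0, 1; -D, -γ])
    (C : Matrix (Fin 2) (Fin 1) ℝ) (hC : C = !![0; σ]) :
    ∃ c > 0, ∃ δ > 0, ∀ Δ : ℝ, 0 < Δ → Δ < δ → ∀ i j : Fin 2,
      |(∫ s in (0:ℝ)..Δ,
          ((NormedSpace.exp (s • M)) * (C * Cᵀ) * (NormedSpace.exp (s • Mᵀ))) i j) -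
        (σ ^ 2 • !![Δ ^ 3 / 3, Δ ^ 2 / 2 - γ * Δ ^ 3 / 2;
          Δ ^ 2 / 2 - γ * Δ ^ 3 / 2,
          Δ - γ * Δ ^ 2 + (2 * γ ^ 2 - D) * Δ ^ 3 / 3] : Matrix (Fin 2) (Fin 2) ℝ) i j|
        ≤ c * Δ ^ 4 := by
  let : NormedRing (Matrix (Fin 2) (Fin 2) ℝ) := Matrix.linftyOpNormedRing
  let : NormedAlgebra ℝ (Matrix (Fin 2) (Fin 2) ℝ) := Matrix.linftyOpNormedAlgebra
  obtain ⟨c, hc, hbound⟩ := (exp_smul_mul_mul_exp_smul_sub_taylor_isBigO M (C * Cᵀ) Mᵀ).exists_pos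
  obtain ⟨δ, hδ, hball⟩ := Metric.eventually_nhds_iff.1 hbound.bound
  refine ⟨c / 4, by positivity, δ, hδ, fun Δ hΔ hΔδ i j => ?_⟩
  rw [← harmonicOscillator_taylor_coeffs D γ σ Δ hM hC]
  have hcont : Continuous fun s : ℝ => (exp (s • M) * (C * Cᵀ) * exp (s • Mᵀ)) i j :=
    (((continuous_exp_smul M).mul continuous_const).mul (continuous_exp_smul Mᵀ)).matrix_elem i j
  refine norm_integral_sub_quadratic_le hΔ.le (hcont.intervalIntegrable _ _) fun s hs => ?_
  have hs_lt : dist s 0 < δ := by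
    rw [Real.dist_0_eq_abs, abs_of_pos hs.1]; exact hs.2.trans_lt hΔδ
  calc _ ≤ _ := Matrix.norm_entry_le_linfty_opNorm _ i j
    _ ≤ c * ‖s ^ 3‖ := hball hs_lt
    _ = c * s ^ 3 := by rw [Real.norm_of_nonneg (pow_nonneg hs.1.le 3)]

/-- For the harmonic oscillator OU process, the conditional covariance
`∫₀^Δ e^{sM} CCᵀ e^{sMᵀ} ds` equals, entrywise up to `O(Δ⁴)`,
`σ² [[Δ³/3, Δ²/2 − γΔ³/2],[Δ²/2 − γΔ³/2, Δ − γΔ² + (2γ²−D)Δ³/3]]`. -/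
theorem stmt_6 (D γ σ : ℝ) (hD : 0 < D) (hγ : 0 < γ) (hσ : 0 < σ)
    (M : Matrix (Fin 2) (Fin 2) ℝ) (hM : M = !![0, 1; -D, -γ])
    (C : Matrix (Fin 2) (Fin 1) ℝ) (hC : C = !![0; σ]) :
    ∃ c > 0, ∃ δ > 0, ∀ Δ : ℝ, 0 < Δ → Δ < δ → ∀ i j : Fin 2,
      |(∫ s in (0:ℝ)..Δ,
          ((NormedSpace.exp (s • M)) * (C * Cᵀ) * (NormedSpace.exp (s • Mᵀ))) i j) -
        (σ ^ 2 • !![Δ ^ 3 / 3, Δ ^ 2 / 2 - γ * Δ ^ 3 / 2;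
          Δ ^ 2 / 2 - γ * Δ ^ 3 / 2,
          Δ - γ * Δ ^ 2 + (2 * γ ^ 2 - D) * Δ ^ 3 / 3] : Matrix (Fin 2) (Fin 2) ℝ) i j|
        ≤ c * Δ ^ 4 :=
  stmt_6_general D γ σ M hM C hC
end

section
/- Let (ξ_{n,i})_{i≤n} be a triangular array adapted to filtrations G_{n,i} such that Σᵢ E(ξ_{n,i} | G_{n,i-1}) → 0 in probability and Σᵢ E(ξ_{n,i}² | G_{n,i-1}) → 0 in probability as n → ∞. Then Σᵢ ξ_{n,i} → 0 in probability. -/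
/-!
Split `∑ᵢ ξ_{n,i}` into the predictable part `∑ᵢ E(ξ_{n,i} | G_{n,i-1})`, which tends to `0` by
hypothesis, and a sum of martingale increments `ξ_{n,i} - E(ξ_{n,i} | G_{n,i-1})`. Killing these
increments once `V_{n,i} = ∑_{j ≤ i} E(ξ_{n,j}² | G_{n,j-1})` exceeds `a` is a predictable
truncation, so the increments stay orthogonal, and since a conditional variance is at most the
conditional second moment, the truncated sum has second moment at most `a`. It agrees with the
untruncated sum on `{V_{n,n} ≤ a}`, so Chebyshev gives the Lenglart-type bound
`P(|∑ᵢ (ξ_{n,i} - E(ξ_{n,i} | G_{n,i-1}))| ≥ ε) ≤ a / ε² + P(V_{n,n} > a)`; let `n → ∞`, then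
`a → 0`.
-/

open MeasureTheory Filter ProbabilityTheory Finset

namespace MeasureTheory

variable {Ω : Type*} {m m0 : MeasurableSpace Ω} {μ : Measure Ω}

theorem TendstoInMeasure.add {ι E : Type*} [SeminormedAddCommGroup E] {l : Filter ι}
    {f g : ι → Ω → E} {F G : Ω → E} (hf : TendstoInMeasure μ f l F)
    (hg : TendstoInMeasure μ g l G) : TendstoInMeasure μ (f + g) l (F + G) := by
  rw [tendstoInMeasure_iff_norm] at hf hg ⊢
  intro ε hε
  have hsum := (hf (ε / 2) (half_pos hε)).add (hg (ε / 2) (half_pos hε))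
  rw [add_zero] at hsum
  refine tendsto_of_tendsto_of_tendsto_of_le_of_le tendsto_const_nhds hsum (fun _ => zero_le)
    fun i => (measure_mono fun ω hω => ?_).trans (measure_union_le _ _)
  have hle : ‖(f + g) i ω - (F + G) ω‖ ≤ ‖f i ω - F ω‖ + ‖g i ω - G ω‖ := by
    rw [Pi.add_apply, Pi.add_apply, Pi.add_apply, add_sub_add_comm]
    exact norm_add_le _ _
  by_contra! h
  simp only [Set.mem_union, Set.mem_ofPred_eq, not_or, not_le] at h hω
  linarith

theorem measureReal_abs_ge_le_integral_sq_div [IsFiniteMeasure μ] {g : Ω → ℝ} (hg : MemLp g 2 μ)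
    {ε : ℝ} (hε : 0 < ε) : μ.real {ω | ε ≤ |g ω|} ≤ (∫ ω, g ω ^ 2 ∂μ) / ε ^ 2 := by
  rw [le_div_iff₀ (by positivity), mul_comm]
  calc ε ^ 2 * μ.real {ω | ε ≤ |g ω|} ≤ ε ^ 2 * μ.real {ω | ε ^ 2 ≤ g ω ^ 2} := by
        refine mul_le_mul_of_nonneg_left (measureReal_mono fun ω hω => ?_) (sq_nonneg ε)
        simpa [sq_abs] using pow_le_pow_left₀ hε.le hω.out 2
    _ ≤ ∫ ω, g ω ^ 2 ∂μ :=
        mul_meas_ge_le_integral_of_nonneg (ae_of_all _ fun ω => sq_nonneg _) hg.integrable_sq _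

theorem integral_sum_sq_of_orthogonal {ι : Type*} {s : Finset ι} {f : ι → Ω → ℝ}
    (hf : ∀ i ∈ s, MemLp (f i) 2 μ)
    (horth : ∀ i ∈ s, ∀ j ∈ s, i ≠ j → ∫ ω, f i ω * f j ω ∂μ = 0) :
    ∫ ω, (∑ i ∈ s, f i ω) ^ 2 ∂μ = ∑ i ∈ s, ∫ ω, f i ω ^ 2 ∂μ := by
  have hint : ∀ i ∈ s, ∀ j ∈ s, Integrable (fun ω => f i ω * f j ω) μ :=
    fun i hi j hj => (hf i hi).integrable_mul (hf j hj)
  simp_rw [sq, Finset.sum_mul_sum]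
  rw [integral_finsetSum _ fun i hi => integrable_finsetSum _ fun j hj => hint i hi j hj]
  refine Finset.sum_congr rfl fun i hi => ?_
  rw [integral_finsetSum _ fun j hj => hint i hi j hj]
  exact Finset.sum_eq_single_of_mem i hi fun j hj hji => horth i hi j hj hji.symm

theorem condExp_sub_condExp_ae_eq_zero (hm : m ≤ m0) [SigmaFinite (μ.trim hm)] {X : Ω → ℝ}
    (hX : Integrable X μ) : μ[X - μ[X|m]|m] =ᵐ[μ] 0 := by
  filter_upwards [condExp_sub hX integrable_condExp m] with ω hω
  rw [hω, condExp_of_stronglyMeasurable hm stronglyMeasurable_condExp integrable_condExp,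
    Pi.sub_apply, sub_self, Pi.zero_apply]

theorem integral_mul_eq_zero_of_condExp_ae_eq_zero (hm : m ≤ m0) [SigmaFinite (μ.trim hm)]
    {F Y : Ω → ℝ} (hF : StronglyMeasurable[m] F) (hFY : Integrable (F * Y) μ)
    (hY : Integrable Y μ) (hY0 : μ[Y|m] =ᵐ[μ] 0) : ∫ ω, F ω * Y ω ∂μ = 0 := by
  have hFY0 : μ[F * Y|m] =ᵐ[μ] 0 := by
    filter_upwards [condExp_mul_of_stronglyMeasurable_left hF hFY hY, hY0] with ω h h0
    simp [h, h0]
  calc ∫ ω, F ω * Y ω ∂μ = ∫ ω, (μ[F * Y|m]) ω ∂μ := (integral_condExp hm).symm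
    _ = 0 := by simp [integral_congr_ae hFY0]

theorem setIntegral_sq_sub_condExp_le (hm : m ≤ m0) [IsFiniteMeasure μ] {X : Ω → ℝ}
    (hX : MemLp X 2 μ) {s : Set Ω} (hs : MeasurableSet[m] s) :
    ∫ ω in s, (X ω - (μ[X|m]) ω) ^ 2 ∂μ ≤ ∫ ω in s, (μ[fun ω => X ω ^ 2|m]) ω ∂μ := by
  have hvar : Integrable ((X - μ[X|m]) ^ 2) μ := (hX.sub (hX.condExp one_le_two)).integrable_sq
  rw [← setIntegral_condVar (hm := hm) hvar hs]
  exact setIntegral_mono_ae integrable_condVar.integrableOn integrable_condExp.integrableOn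
    (condVar_ae_le_condExp_sq hm hX)

theorem tendstoInMeasure_zero_of_measureReal_le [IsFiniteMeasure μ] {M V : ℕ → Ω → ℝ}
    (hV : TendstoInMeasure μ V atTop 0)
    (hMV : ∀ n, ∀ a > 0, ∀ ε > 0,
      μ.real {ω | ε ≤ |M n ω|} ≤ a / ε ^ 2 + μ.real {ω | a < V n ω}) :
    TendstoInMeasure μ M atTop 0 := by
  rw [tendstoInMeasure_iff_measureReal_dist] at hV ⊢
  intro ε hε
  rw [Metric.tendsto_nhds]
  intro δ hδ
  set a := ε ^ 2 * δ / 2 with ha_def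
  have ha : 0 < a := by positivity
  filter_upwards [Metric.tendsto_nhds.1 (hV a ha) (δ / 2) (half_pos hδ)] with n hn
  simp only [Pi.zero_apply, Real.dist_eq, sub_zero, abs_of_nonneg measureReal_nonneg] at hn ⊢
  have hVa : μ.real {ω | a < V n ω} ≤ μ.real {ω | a ≤ |V n ω|} :=
    measureReal_mono fun ω hω => hω.out.le.trans (le_abs_self _)
  have haε : a / ε ^ 2 = δ / 2 := by rw [ha_def]; field_simp
  linarith [hMV n a ha ε hε]

end MeasureTheory

theorem Finset.sum_range_ite_sum_range_succ_le {q : ℕ → ℝ} (hq : ∀ i, 0 ≤ q i) {a : ℝ}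
    (ha : 0 ≤ a) (n : ℕ) :
    ∑ i ∈ range n, (if ∑ j ∈ range (i + 1), q j ≤ a then q i else 0) ≤ a := by
  induction n with
  | zero => simpa using ha
  | succ n ih =>
    rw [sum_range_succ]
    split_ifs with h
    · calc ∑ i ∈ range n, (if ∑ j ∈ range (i + 1), q j ≤ a then q i else 0) + q n
          ≤ ∑ i ∈ range n, q i + q n := by
            gcongr with i
            split_ifs
            exacts [le_rfl, hq i]
        _ ≤ a := by rwa [← sum_range_succ]
    · simpa using ih

namespace ProbabilityTheory

section TruncatedIncrement

variable {Ω : Type*} {m0 : MeasurableSpace Ω} (μ : Measure Ω) (ℱ : Filtration ℕ m0)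
  (X : ℕ → Ω → ℝ)

noncomputable def condSqSum (n : ℕ) : Ω → ℝ := ∑ i ∈ range n, μ[fun ω => X i ω ^ 2|ℱ i]

/-- `X i` is the increment observed at time `i + 1`, centred by conditioning on `ℱ i`; it is
dropped once the predictable sum `condSqSum (i + 1)` exceeds `a`. -/
noncomputable def truncatedIncrement (a : ℝ) (i : ℕ) : Ω → ℝ :=
  {ω | condSqSum μ ℱ X (i + 1) ω ≤ a}.indicator (X i - μ[X i|ℱ i])

variable {μ ℱ X}

theorem ae_forall_condExp_sq_nonneg : ∀ᵐ ω ∂μ, ∀ i, 0 ≤ (μ[fun ω => X i ω ^ 2|ℱ i]) ω :=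
  ae_all_iff.2 fun _ => condExp_nonneg (ae_of_all _ fun _ => sq_nonneg _)

variable (μ ℱ X) in
theorem measurableSet_condSqSum_succ_le (a : ℝ) (i : ℕ) :
    MeasurableSet[ℱ i] {ω | condSqSum μ ℱ X (i + 1) ω ≤ a} := by
  have hsum : StronglyMeasurable[ℱ i] (condSqSum μ ℱ X (i + 1)) :=
    Finset.stronglyMeasurable_sum _ fun j hj =>
      stronglyMeasurable_condExp.mono (ℱ.mono (Nat.lt_succ_iff.1 (mem_range.1 hj)))
  exact hsum.measurable measurableSet_Iic

theorem stronglyMeasurable_truncatedIncrement (hX : ∀ i, StronglyMeasurable[ℱ (i + 1)] (X i))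
    (a : ℝ) (i : ℕ) : StronglyMeasurable[ℱ (i + 1)] (truncatedIncrement μ ℱ X a i) :=
  ((hX i).sub (stronglyMeasurable_condExp.mono (ℱ.mono i.le_succ))).indicator
    (ℱ.mono i.le_succ _ (measurableSet_condSqSum_succ_le μ ℱ X a i))

theorem sum_truncatedIncrement_ae_eq (a : ℝ) (n : ℕ) :
    ∀ᵐ ω ∂μ, condSqSum μ ℱ X n ω ≤ a →
      ∑ i ∈ range n, truncatedIncrement μ ℱ X a i ω = ∑ i ∈ range n, (X i ω - (μ[X i|ℱ i]) ω) := by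
  filter_upwards [ae_forall_condExp_sq_nonneg] with ω hq hn
  refine sum_congr rfl fun i hi => Set.indicator_of_mem (s := {ω | condSqSum μ ℱ X (i + 1) ω ≤ a})
    (le_trans ?_ hn) _
  simp only [condSqSum, Finset.sum_apply]
  exact sum_le_sum_of_subset_of_nonneg (range_subset_range.2 (mem_range.1 hi)) fun j _ _ => hq j

theorem memLp_truncatedIncrement (hX2 : ∀ i, MemLp (X i) 2 μ) (a : ℝ) (i : ℕ) :
    MemLp (truncatedIncrement μ ℱ X a i) 2 μ :=
  ((hX2 i).sub ((hX2 i).condExp one_le_two)).indicator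
    (ℱ.le i _ (measurableSet_condSqSum_succ_le μ ℱ X a i))

theorem condExp_truncatedIncrement [IsFiniteMeasure μ] (hX2 : ∀ i, MemLp (X i) 2 μ) (a : ℝ)
    (i : ℕ) : μ[truncatedIncrement μ ℱ X a i|ℱ i] =ᵐ[μ] 0 := by
  have hint : Integrable (X i - μ[X i|ℱ i]) μ :=
    ((hX2 i).integrable one_le_two).sub integrable_condExp
  filter_upwards [condExp_indicator hint (measurableSet_condSqSum_succ_le μ ℱ X a i),
    condExp_sub_condExp_ae_eq_zero (ℱ.le i) ((hX2 i).integrable one_le_two)] with ω h h0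
  simp [truncatedIncrement, h, h0]

theorem integral_truncatedIncrement_mul_of_lt [IsFiniteMeasure μ]
    (hX : ∀ i, StronglyMeasurable[ℱ (i + 1)] (X i))
    (hX2 : ∀ i, MemLp (X i) 2 μ) (a : ℝ) {i j : ℕ} (hij : i < j) :
    ∫ ω, truncatedIncrement μ ℱ X a i ω * truncatedIncrement μ ℱ X a j ω ∂μ = 0 :=
  integral_mul_eq_zero_of_condExp_ae_eq_zero (ℱ.le j)
    ((stronglyMeasurable_truncatedIncrement hX a i).mono (ℱ.mono hij))
    ((memLp_truncatedIncrement hX2 a i).integrable_mul (memLp_truncatedIncrement hX2 a j))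
    ((memLp_truncatedIncrement hX2 a j).integrable one_le_two) (condExp_truncatedIncrement hX2 a j)

theorem integral_truncatedIncrement_sq_le [IsFiniteMeasure μ] (hX2 : ∀ i, MemLp (X i) 2 μ)
    (a : ℝ) (i : ℕ) :
    ∫ ω, truncatedIncrement μ ℱ X a i ω ^ 2 ∂μ
      ≤ ∫ ω, {ω | condSqSum μ ℱ X (i + 1) ω ≤ a}.indicator (μ[fun ω => X i ω ^ 2|ℱ i]) ω ∂μ := by
  have hs := measurableSet_condSqSum_succ_le μ ℱ X a i
  calc ∫ ω, truncatedIncrement μ ℱ X a i ω ^ 2 ∂μ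
      = ∫ ω in {ω | condSqSum μ ℱ X (i + 1) ω ≤ a}, (X i ω - (μ[X i|ℱ i]) ω) ^ 2 ∂μ := by
        rw [← integral_indicator (ℱ.le i _ hs)]
        congr 1 with ω
        simp [truncatedIncrement, Set.indicator_apply]
    _ ≤ _ := setIntegral_sq_sub_condExp_le (ℱ.le i) (hX2 i) hs
    _ = _ := (integral_indicator (ℱ.le i _ hs)).symm

theorem integral_sq_sum_truncatedIncrement_le [IsProbabilityMeasure μ]
    (hX : ∀ i, StronglyMeasurable[ℱ (i + 1)] (X i)) (hX2 : ∀ i, MemLp (X i) 2 μ) {a : ℝ}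
    (ha : 0 ≤ a) (n : ℕ) : ∫ ω, (∑ i ∈ range n, truncatedIncrement μ ℱ X a i ω) ^ 2 ∂μ ≤ a := by
  have hint : ∀ i, Integrable
      ({ω | condSqSum μ ℱ X (i + 1) ω ≤ a}.indicator (μ[fun ω => X i ω ^ 2|ℱ i])) μ :=
    fun i => integrable_condExp.indicator (ℱ.le i _ (measurableSet_condSqSum_succ_le μ ℱ X a i))
  have hbound : ∀ᵐ ω ∂μ, ∑ i ∈ range n,
      {ω | condSqSum μ ℱ X (i + 1) ω ≤ a}.indicator (μ[fun ω => X i ω ^ 2|ℱ i]) ω ≤ a := by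
    filter_upwards [ae_forall_condExp_sq_nonneg] with ω hq
    simpa only [Set.indicator_apply, Set.mem_ofPred_eq, condSqSum, Finset.sum_apply] using
      Finset.sum_range_ite_sum_range_succ_le hq ha n
  calc ∫ ω, (∑ i ∈ range n, truncatedIncrement μ ℱ X a i ω) ^ 2 ∂μ
      = ∑ i ∈ range n, ∫ ω, truncatedIncrement μ ℱ X a i ω ^ 2 ∂μ := by
        refine integral_sum_sq_of_orthogonal (fun i _ => memLp_truncatedIncrement hX2 a i)
          fun i _ j _ hij => ?_
        rcases hij.lt_or_gt with h | h
        · exact integral_truncatedIncrement_mul_of_lt hX hX2 a h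
        · simpa only [mul_comm] using integral_truncatedIncrement_mul_of_lt hX hX2 a h
    _ ≤ ∑ i ∈ range n, ∫ ω,
          {ω | condSqSum μ ℱ X (i + 1) ω ≤ a}.indicator (μ[fun ω => X i ω ^ 2|ℱ i]) ω ∂μ :=
        sum_le_sum fun i _ => integral_truncatedIncrement_sq_le hX2 a i
    _ = ∫ ω, ∑ i ∈ range n,
          {ω | condSqSum μ ℱ X (i + 1) ω ≤ a}.indicator (μ[fun ω => X i ω ^ 2|ℱ i]) ω ∂μ :=
        (integral_finsetSum _ fun i _ => hint i).symm
    _ ≤ ∫ _, a ∂μ := integral_mono_ae (integrable_finsetSum _ fun i _ => hint i)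
        (integrable_const a) hbound
    _ = a := by simp

theorem measureReal_abs_sum_sub_condExp_ge_le [IsProbabilityMeasure μ]
    (hX : ∀ i, StronglyMeasurable[ℱ (i + 1)] (X i)) (hX2 : ∀ i, MemLp (X i) 2 μ) {a ε : ℝ}
    (ha : 0 ≤ a) (hε : 0 < ε) (n : ℕ) :
    μ.real {ω | ε ≤ |∑ i ∈ range n, (X i ω - (μ[X i|ℱ i]) ω)|}
      ≤ a / ε ^ 2 + μ.real {ω | a < condSqSum μ ℱ X n ω} := by
  set T := fun ω => ∑ i ∈ range n, truncatedIncrement μ ℱ X a i ω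
  have hsub : {ω | ε ≤ |∑ i ∈ range n, (X i ω - (μ[X i|ℱ i]) ω)|}
      ≤ᵐ[μ] ({ω | ε ≤ |T ω|} ∪ {ω | a < condSqSum μ ℱ X n ω} : Set Ω) := by
    filter_upwards [sum_truncatedIncrement_ae_eq a n] with ω hT hω
    change ε ≤ _ at hω
    change ε ≤ |∑ i ∈ range n, truncatedIncrement μ ℱ X a i ω| ∨ a < condSqSum μ ℱ X n ω
    by_cases hn : a < condSqSum μ ℱ X n ω
    · exact Or.inr hn
    · exact Or.inl (by rwa [hT (not_lt.1 hn)])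
  have hT : MemLp T 2 μ := memLp_finsetSum _ fun i _ => memLp_truncatedIncrement hX2 a i
  calc μ.real {ω | ε ≤ |∑ i ∈ range n, (X i ω - (μ[X i|ℱ i]) ω)|}
      ≤ μ.real ({ω | ε ≤ |T ω|} ∪ {ω | a < condSqSum μ ℱ X n ω}) :=
        ENNReal.toReal_mono (measure_ne_top _ _) (measure_mono_ae hsub)
    _ ≤ μ.real {ω | ε ≤ |T ω|} + μ.real {ω | a < condSqSum μ ℱ X n ω} := measureReal_union_le _ _
    _ ≤ a / ε ^ 2 + μ.real {ω | a < condSqSum μ ℱ X n ω} := by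
        gcongr
        exact (measureReal_abs_ge_le_integral_sq_div hT hε).trans
          (div_le_div_of_nonneg_right (integral_sq_sum_truncatedIncrement_le hX hX2 ha n)
            (sq_nonneg ε))

end TruncatedIncrement

end ProbabilityTheory

/-- Lemma 9 of Genon-Catalot & Jacod (1993): for a triangular array `(ξ_{n,i})`
adapted to filtrations `(G_{n,i})`, if both `Σᵢ E(ξ_{n,i}|G_{n,i−1})` and
`Σᵢ E(ξ_{n,i}²|G_{n,i−1})` tend to 0 in probability, then `Σᵢ ξ_{n,i} → 0`
in probability. -/
theorem stmt_12 {Ω : Type*} [m0 : MeasurableSpace Ω] (P : Measure Ω) [IsProbabilityMeasure P]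
    (𝒢 : ℕ → ℕ → MeasurableSpace Ω)
    (hle : ∀ n i, 𝒢 n i ≤ m0) (hmono : ∀ n, Monotone (𝒢 n))
    (ξ : ℕ → ℕ → Ω → ℝ)
    (hadapted : ∀ n i, Measurable[𝒢 n (i + 1)] (ξ n (i + 1)))
    (hL2 : ∀ n i, MemLp (ξ n i) 2 P)
    (h1 : TendstoInMeasure P
      (fun n => ∑ i ∈ Finset.range n, P[ξ n (i + 1)|𝒢 n i]) atTop (fun _ => 0))
    (h2 : TendstoInMeasure P
      (fun n => ∑ i ∈ Finset.range n, P[fun ω => (ξ n (i + 1) ω) ^ 2|𝒢 n i]) atTop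
      (fun _ => 0)) :
    TendstoInMeasure P
      (fun n ω => ∑ i ∈ Finset.range n, ξ n (i + 1) ω) atTop (fun _ => 0) := by
  let ℱ : ℕ → Filtration ℕ m0 := fun n => ⟨𝒢 n, hmono n, hle n⟩
  have hM : TendstoInMeasure P
      (fun n ω => ∑ i ∈ range n, (ξ n (i + 1) ω - (P[ξ n (i + 1)|𝒢 n i]) ω)) atTop 0 :=
    tendstoInMeasure_zero_of_measureReal_le
      (V := fun n => condSqSum P (ℱ n) (fun i => ξ n (i + 1)) n) h2 fun n _ ha _ hε =>
        measureReal_abs_sum_sub_condExp_ge_le (ℱ := ℱ n) (X := fun i => ξ n (i + 1))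
          (fun i => (hadapted n i).stronglyMeasurable) (fun i => hL2 n (i + 1)) ha.le hε n
  refine ((h1.add hM).congr_left fun n => ae_of_all _ fun ω => ?_).congr_right (by simp)
  simp
end

section
/- Consider the 2×2 symmetric matrix Σ(Δ) = σ² [[Δ³/3, Δ²/2 − Δ³γ/3],[Δ²/2 − Δ³γ/3, Δ − Δ²γ + Δ³γ²/3]] (the variance matrix of the order-1.5 scheme for the harmonic oscillator). For every γ ∈ ℝ, σ > 0, and all sufficiently small Δ > 0, Σ(Δ) is positive definite; in particular det Σ(Δ) = σ⁴(Δ⁴/12 + O(Δ⁵)) > 0 for small Δ. -/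
/-!
The Δ⁵ and Δ⁶ terms of the determinant cancel, so `det Σ(Δ) = σ⁴ Δ⁴ / 12` exactly and the
remainder vanishes. Together with the positive corner entry `σ² Δ³ / 3`, Sylvester's criterion
for `2 × 2` matrices then gives positive definiteness for every `Δ > 0`.
-/

open Matrix

namespace Matrix

variable {𝕜 : Type*} [Field 𝕜] [LinearOrder 𝕜] [IsStrictOrderedRing 𝕜] [StarRing 𝕜]
  [TrivialStar 𝕜]

theorem posDef_fin_two_of {a b c : 𝕜} (ha : 0 < a) (hdet : 0 < a * c - b * b) :
    (!![a, b; b, c] : Matrix (Fin 2) (Fin 2) 𝕜).PosDef := by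
  refine .of_dotProduct_mulVec_pos (isHermitian_iff_isSymm.mpr <| IsSymm.ext fun i j => ?_)
    fun x hx => ?_
  · fin_cases i <;> fin_cases j <;> rfl
  have hquad : star x ⬝ᵥ (!![a, b; b, c] *ᵥ x) =
      a * x 0 ^ 2 + 2 * b * x 0 * x 1 + c * x 1 ^ 2 := by
    simp only [star_trivial, dotProduct, mulVec, Fin.sum_univ_two, of_apply, cons_val',
      cons_val_zero, cons_val_one, empty_val', cons_val_fin_one]
    ring
  rw [hquad]
  rcases eq_or_ne (x 1) 0 with h1 | h1
  · have h0 : x 0 ≠ 0 := fun h0 => hx (by ext i; fin_cases i <;> assumption)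
    simpa [h1] using mul_pos ha (sq_pos_of_ne_zero h0)
  · have hsquare : a * (a * x 0 ^ 2 + 2 * b * x 0 * x 1 + c * x 1 ^ 2) =
        (a * x 0 + b * x 1) ^ 2 + (a * c - b * b) * x 1 ^ 2 := by ring
    have hpos : 0 < a * (a * x 0 ^ 2 + 2 * b * x 0 * x 1 + c * x 1 ^ 2) := by
      rw [hsquare]
      exact add_pos_of_nonneg_of_pos (sq_nonneg _) (mul_pos hdet (sq_pos_of_ne_zero h1))
    exact pos_of_mul_pos_right hpos ha.le

end Matrix

theorem det_oscillatorVariance (γ Δ : ℝ) :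
    (!![Δ ^ 3 / 3, Δ ^ 2 / 2 - Δ ^ 3 * γ / 3;
      Δ ^ 2 / 2 - Δ ^ 3 * γ / 3, Δ - Δ ^ 2 * γ + Δ ^ 3 * γ ^ 2 / 3]).det = Δ ^ 4 / 12 := by
  rw [det_fin_two_of]
  ring

theorem posDef_oscillatorVariance (γ : ℝ) {Δ : ℝ} (hΔ : 0 < Δ) :
    (!![Δ ^ 3 / 3, Δ ^ 2 / 2 - Δ ^ 3 * γ / 3;
      Δ ^ 2 / 2 - Δ ^ 3 * γ / 3, Δ - Δ ^ 2 * γ + Δ ^ 3 * γ ^ 2 / 3]).PosDef := by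
  refine posDef_fin_two_of (by positivity) ?_
  rw [← det_fin_two_of, det_oscillatorVariance]
  positivity

/-- The variance matrix of the order-1.5 scheme for the harmonic oscillator,
`Σ(Δ) = σ²[[Δ³/3, Δ²/2 − Δ³γ/3],[Δ²/2 − Δ³γ/3, Δ − Δ²γ + Δ³γ²/3]]`, is positive
definite for all sufficiently small `Δ > 0`, with
`det Σ(Δ) = σ⁴(Δ⁴/12 + O(Δ⁵)) > 0`. -/
theorem stmt_15 (γ σ : ℝ) (hσ : 0 < σ)
    (S : ℝ → Matrix (Fin 2) (Fin 2) ℝ)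
    (hS : ∀ Δ : ℝ, S Δ = σ ^ 2 •
      !![Δ ^ 3 / 3, Δ ^ 2 / 2 - Δ ^ 3 * γ / 3;
        Δ ^ 2 / 2 - Δ ^ 3 * γ / 3, Δ - Δ ^ 2 * γ + Δ ^ 3 * γ ^ 2 / 3]) :
    ∃ δ > 0, ∃ c > 0, ∀ Δ : ℝ, 0 < Δ → Δ < δ →
      (S Δ).PosDef ∧ 0 < (S Δ).det ∧
      |(S Δ).det - σ ^ 4 * (Δ ^ 4 / 12)| ≤ σ ^ 4 * c * Δ ^ 5 := by
  refine ⟨1, one_pos, 1, one_pos, fun Δ hΔ _ => ?_⟩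
  have hdet : (S Δ).det = σ ^ 4 * (Δ ^ 4 / 12) := by
    rw [hS, det_smul, det_oscillatorVariance, Fintype.card_fin, ← pow_mul]
  rw [hdet, sub_self, abs_zero, hS]
  exact ⟨(posDef_oscillatorVariance γ hΔ).smul (by positivity), by positivity, by positivity⟩
end
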